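/- Let H be a graph on n vertices and G = W(H) its whisker graph. Then for every q ≥ 1 with q ≤ ν(G), the dimension of the q-matching-free complex MF^q(G) equals n + q − 2; equivalently, the maximum size of a subset F ⊆ V(G) whose induced subgraph has no matching of size q is n + q − 1. -/

import Mathlib

variable {V : Type*}

/-- `M` is a set of pairwise disjoint edges of `G` with all endpoints in `F`. -/
def IsMatchingOn (G : SimpleGraph V) (F : Finset V) (M : Finset (Sym2 V)) : Prop :=
  (∀ e ∈ M, e ∈ G.edgeSet) ∧
  (∀ e ∈ M, ∀ v ∈ e, v ∈ F) ∧
  (∀ e ∈ M, ∀ e' ∈ M, e ≠ e' → ∀ v ∈ e, v ∉ e')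

/-- `F` is a face of the `q`-matching-free complex `MF^q(G)`. -/
def MFFace (G : SimpleGraph V) (q : ℕ) (F : Finset V) : Prop :=
  ¬ ∃ M : Finset (Sym2 V), IsMatchingOn G F M ∧ M.card = q

/-- `F` is a facet (maximal face) of the complex with face predicate `faces`. -/
def IsFacet (faces : Finset V → Prop) (F : Finset V) : Prop :=
  faces F ∧ ∀ F', faces F' → F ⊆ F' → F = F'

/-- Even-connection of `u` and `v` with respect to the pairwise disjoint edges in `M`. -/
def EvenConnected (G : SimpleGraph V) (M : Finset (Sym2 V)) (u v : V) : Prop :=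
  ∃ (r : ℕ) (p : ℕ → V), 1 ≤ r ∧ p 0 = u ∧ p (2 * r + 1) = v ∧
    (∀ k, k ≤ 2 * r → G.Adj (p k) (p (k + 1))) ∧
    (∀ k, k < r → s(p (2 * k + 1), p (2 * k + 2)) ∈ M) ∧
    (∀ k l, k < r → l < r →
      s(p (2 * k + 1), p (2 * k + 2)) = s(p (2 * l + 1), p (2 * l + 2)) → k = l)

/-- The set of vertices covered by the edges in `M`. -/
def mSupp (M : Finset (Sym2 V)) : Set V := {v | ∃ e ∈ M, v ∈ e}

/-- The even-connection graph `G^{e₁⋯e_q}` (vertices covered by `M` are isolated). -/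
def evenConnGraph (G : SimpleGraph V) (M : Finset (Sym2 V)) : SimpleGraph V where
  Adj x y := x ≠ y ∧ x ∉ mSupp M ∧ y ∉ mSupp M ∧
    (G.Adj x y ∨ EvenConnected G M x y ∨ EvenConnected G M y x)
  symm := ⟨by
    rintro x y ⟨hne, hx, hy, h⟩
    refine ⟨hne.symm, hy, hx, ?_⟩
    rcases h with h | h | h
    · exact Or.inl h.symm
    · exact Or.inr (Or.inr h)
    · exact Or.inr (Or.inl h)⟩
  loopless := ⟨fun x h => h.1 rfl⟩

/-- Delete a set of vertices from a graph (keeping them as isolated vertices). -/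
def delSet (G : SimpleGraph V) (S : Set V) : SimpleGraph V where
  Adj x y := G.Adj x y ∧ x ∉ S ∧ y ∉ S
  symm := ⟨fun x y ⟨h, hx, hy⟩ => ⟨h.symm, hy, hx⟩⟩
  loopless := ⟨fun x ⟨h, _, _⟩ => G.loopless.irrefl x h⟩

/-- The whisker graph `W(H)`: each vertex `x` (as `Sum.inl x`) gets a pendant
whisker vertex `Sum.inr x`. -/
def whisker (H : SimpleGraph V) : SimpleGraph (V ⊕ V) where
  Adj x y :=
    (∃ a b, x = Sum.inl a ∧ y = Sum.inl b ∧ H.Adj a b) ∨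
    (∃ a, (x = Sum.inl a ∧ y = Sum.inr a) ∨ (x = Sum.inr a ∧ y = Sum.inl a))
  symm := ⟨by
    rintro x y (⟨a, b, hx, hy, hab⟩ | ⟨a, h | h⟩)
    · exact Or.inl ⟨b, a, hy, hx, hab.symm⟩
    · exact Or.inr ⟨a, Or.inr ⟨h.2, h.1⟩⟩
    · exact Or.inr ⟨a, Or.inl ⟨h.2, h.1⟩⟩⟩
  loopless := ⟨by
    rintro x (⟨a, b, hx, hy, hab⟩ | ⟨a, ⟨h1, h2⟩ | ⟨h1, h2⟩⟩)
    · obtain rfl := Sum.inl_injective (hx ▸ hy : (Sum.inl a : V ⊕ V) = Sum.inl b)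
      exact H.loopless.irrefl a hab
    · exact Sum.inl_ne_inr (h1 ▸ h2 : (Sum.inl a : V ⊕ V) = Sum.inr a)
    · exact Sum.inr_ne_inl (h1 ▸ h2 : (Sum.inr a : V ⊕ V) = Sum.inl a)⟩

/-- Shellability of the complex with face predicate `faces`: there is a linear
order `F 0, F 1, …` of all facets such that each facet meets the union of the
previous ones in a pure subcomplex of codimension one. -/
def Shellable (faces : Finset V → Prop) : Prop :=
  ∃ (t : ℕ) (F : Fin t → Finset V),
    (∀ i, IsFacet faces (F i)) ∧
    (∀ F', IsFacet faces F' → ∃ i, F' = F i) ∧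
    Function.Injective F ∧
    ∀ k : Fin t, 0 < (k : ℕ) → ∀ σ : Finset V, σ ⊆ F k →
      (∃ i, i < k ∧ σ ⊆ F i) →
      ∃ τ : Finset V, σ ⊆ τ ∧ τ ⊆ F k ∧ (∃ i, i < k ∧ τ ⊆ F i) ∧
        τ.card = (F k).card - 1

/-- Vertex decomposability of the complex with face predicate `faces`. -/
inductive VertexDecomposable [DecidableEq V] : (Finset V → Prop) → Prop
  | simplex (faces : Finset V → Prop) (F : Finset V)
      (h : ∀ F', faces F' ↔ F' ⊆ F) : VertexDecomposable faces
  | shed (faces : Finset V → Prop) (v : V)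
      (hdel : VertexDecomposable (fun F => faces F ∧ v ∉ F))
      (hlink : VertexDecomposable (fun F => v ∉ F ∧ faces (insert v F)))
      (hshed : ∀ F, v ∉ F → faces (insert v F) →
        ¬ IsFacet (fun F' => faces F' ∧ v ∉ F') F) :
      VertexDecomposable faces

/-!
The base vertices `Sum.inl a` cover every edge of `W(H)`, so a matching inside `F` has at most
as many edges as `F` has base vertices. Hence all `n` whisker vertices together with `q - 1`
base vertices form a face. Conversely, a set of `n + q` vertices contains both `Sum.inl a` and
`Sum.inr a` for at least `q` vertices `a` of `H`, and the corresponding whisker edges are a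
`q`-matching.
-/

open Finset

theorem IsMatchingOn.card_le_of_forall_exists_mem {G : SimpleGraph V} {F : Finset V}
    {M : Finset (Sym2 V)} (hM : IsMatchingOn G F M) {T : Finset V}
    (hT : ∀ e ∈ M, ∃ v ∈ e, v ∈ T) : #M ≤ #T := by
  refine card_le_card_of_forall_subsingleton (fun e v => v ∈ e)
    (fun e he => (hT e he).imp fun v hv => ⟨hv.2, hv.1⟩) ?_
  rintro v - e ⟨he, hve⟩ e' ⟨he', hve'⟩
  by_contra hne
  exact hM.2.2 e he e' he' hne v hve hve'

theorem whisker_exists_inl_mem (H : SimpleGraph V) {e : Sym2 (V ⊕ V)}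
    (he : e ∈ (whisker H).edgeSet) : ∃ a, Sum.inl a ∈ e := by
  induction e using Sym2.ind with
  | _ x y =>
    rcases he with ⟨a, b, rfl, rfl, _⟩ | ⟨a, ⟨rfl, rfl⟩ | ⟨rfl, rfl⟩⟩ <;> exact ⟨a, by simp⟩

theorem IsMatchingOn.card_le_card_toLeft {H : SimpleGraph V} {F : Finset (V ⊕ V)}
    {M : Finset (Sym2 (V ⊕ V))} (hM : IsMatchingOn (whisker H) F M) :
    #M ≤ #F.toLeft := by
  have hcard := hM.card_le_of_forall_exists_mem (T := F.toLeft.map .inl) fun e he => by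
    obtain ⟨a, ha⟩ := whisker_exists_inl_mem H (hM.1 e he)
    exact ⟨_, ha, mem_map_of_mem _ (mem_toLeft.2 (hM.2.1 e he _ ha))⟩
  rwa [card_map] at hcard

def whiskerEdge (a : V) : Sym2 (V ⊕ V) := s(Sum.inl a, Sum.inr a)

theorem whiskerEdge_injective : Function.Injective (whiskerEdge (V := V)) := by
  intro a b h
  simpa [whiskerEdge] using h

theorem isMatchingOn_whisker_image_whiskerEdge [DecidableEq V] (H : SimpleGraph V)
    {F : Finset (V ⊕ V)} {K : Finset V} (hK : K ⊆ F.toLeft ∩ F.toRight) :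
    IsMatchingOn (whisker H) F (K.image whiskerEdge) := by
  refine ⟨?_, ?_, ?_⟩
  · rintro _ he
    obtain ⟨a, -, rfl⟩ := mem_image.1 he
    exact Or.inr ⟨a, Or.inl ⟨rfl, rfl⟩⟩
  · rintro _ he v hv
    obtain ⟨a, ha, rfl⟩ := mem_image.1 he
    have ha := mem_inter.1 (hK ha)
    rcases Sym2.mem_iff.1 hv with rfl | rfl
    exacts [mem_toLeft.1 ha.1, mem_toRight.1 ha.2]
  · rintro _ he _ he' hne v hv hv'
    obtain ⟨a, -, rfl⟩ := mem_image.1 he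
    obtain ⟨b, -, rfl⟩ := mem_image.1 he'
    have hab : a ≠ b := fun h => hne (h ▸ rfl)
    rcases Sym2.mem_iff.1 hv with rfl | rfl <;> simp_all [whiskerEdge]

theorem exists_isMatchingOn_whisker_of_card_le [Fintype V] (H : SimpleGraph V)
    {F : Finset (V ⊕ V)} {q : ℕ} (hF : Fintype.card V + q ≤ #F) :
    ∃ M, IsMatchingOn (whisker H) F M ∧ #M = q := by
  classical
  have hboth : q ≤ #(F.toLeft ∩ F.toRight) := by
    have := card_union_add_card_inter F.toLeft F.toRight
    have := card_le_univ (F.toLeft ∪ F.toRight)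
    have := card_toLeft_add_card_toRight (u := F)
    omega
  obtain ⟨K, hK, rfl⟩ := exists_subset_card_eq hboth
  exact ⟨_, isMatchingOn_whisker_image_whiskerEdge H hK,
    card_image_of_injective _ whiskerEdge_injective⟩

theorem mfFace_whisker_disjSum_univ [Fintype V] (H : SimpleGraph V) {q : ℕ} {S : Finset V}
    (hS : #S < q) : MFFace (whisker H) q (S.disjSum univ) := by
  rintro ⟨M, hM, rfl⟩
  have := hM.card_le_card_toLeft
  rw [toLeft_disjSum] at this
  omega

theorem card_le_of_isMatchingOn_whisker_univ [Fintype V] {H : SimpleGraph V}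
    {M : Finset (Sym2 (V ⊕ V))} (hM : IsMatchingOn (whisker H) univ M) :
    #M ≤ Fintype.card V := by
  simpa using hM.card_le_card_toLeft

theorem dim_mfComplex_whisker_general
    {V : Type*} [Fintype V] (H : SimpleGraph V)
    (n : ℕ) (hn : Fintype.card V = n) (ν q : ℕ)
    (hν₁ : ∃ M : Finset (Sym2 (V ⊕ V)),
      IsMatchingOn (whisker H) Finset.univ M ∧ M.card = ν)
    (hq : 1 ≤ q) (hqν : q ≤ ν) :
    (∃ F : Finset (V ⊕ V), MFFace (whisker H) q F ∧ F.card = n + q - 1) ∧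
    (∀ F : Finset (V ⊕ V), MFFace (whisker H) q F → F.card ≤ n + q - 1) := by
  obtain ⟨M, hM, rfl⟩ := hν₁
  have hqn : q - 1 ≤ #(univ : Finset V) := by
    have := card_le_of_isMatchingOn_whisker_univ hM
    rw [card_univ]
    omega
  constructor
  · obtain ⟨S, -, hS⟩ := exists_subset_card_eq hqn
    refine ⟨S.disjSum univ, mfFace_whisker_disjSum_univ H (by omega), ?_⟩
    rw [card_disjSum, hS, card_univ, hn]
    omega
  · intro F hF
    by_contra! hbig
    exact hF (exists_isMatchingOn_whisker_of_card_le H (by omega))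

/-- for a whisker graph `G = W(H)` with `|V(H)| = n` and `1 ≤ q ≤ ν(G)`,
the maximum size of a subset of `V(G)` inducing no matching of size `q` is
`n + q - 1`, i.e. `dim MF^q(G) = n + q - 2`. -/
theorem dim_mfComplex_whisker
    {V : Type*} [Fintype V] [DecidableEq V] (H : SimpleGraph V)
    (n : ℕ) (hn : Fintype.card V = n) (ν q : ℕ)
    (hν₁ : ∃ M : Finset (Sym2 (V ⊕ V)),
      IsMatchingOn (whisker H) Finset.univ M ∧ M.card = ν)
    (hν₂ : ∀ M : Finset (Sym2 (V ⊕ V)),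
      IsMatchingOn (whisker H) Finset.univ M → M.card ≤ ν)
    (hq : 1 ≤ q) (hqν : q ≤ ν) :
    (∃ F : Finset (V ⊕ V), MFFace (whisker H) q F ∧ F.card = n + q - 1) ∧
    (∀ F : Finset (V ⊕ V), MFFace (whisker H) q F → F.card ≤ n + q - 1) :=
  dim_mfComplex_whisker_general H n hn ν q hν₁ hq hqν
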